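/- arXiv:2202.10997 — 3 statements merged into one kernel-verified Lean document; each statement's English description precedes it below -/
import Mathlib

section
/- Let μ be a finitely supported probability distribution on a set K, let Δ : Δ_k × P(K) → [0,1] be a function that is convex in its first argument and linear (affine over mixtures) in its second, and let I : Δ_k × P(K) → [0,∞) be linear in its first argument. Define Ψ^λ(π,μ) = Δ(π,μ)^λ / I(π,μ) (with 0/0 = 0), Ψ^λ_*(μ) = min over π of Ψ^λ(π,μ), and Δ_*(μ) = min over π of Δ(π,μ), assuming both minima are attained. Then for every π ∈ Δ_k and λ > 1, Ψ^λ_*(μ) ≤ 2^λ · Δ_*(μ)^{λ-1} · Δ(π,μ) / I(π,μ). -/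
open Finset

theorem stmt_0 {k : ℕ} {M : Type*} (μ : M)
    (Δ I : (Fin k → ℝ) → M → ℝ)
    (hΔ01 : ∀ π ∈ stdSimplex ℝ (Fin k), Δ π μ ∈ Set.Icc (0:ℝ) 1)
    (hΔconv : ∀ π ∈ stdSimplex ℝ (Fin k), ∀ ρ ∈ stdSimplex ℝ (Fin k), ∀ p ∈ Set.Icc (0:ℝ) 1,
      Δ (p • π + (1 - p) • ρ) μ ≤ p * Δ π μ + (1 - p) * Δ ρ μ)
    (hInn : ∀ π ∈ stdSimplex ℝ (Fin k), 0 ≤ I π μ)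
    (hIlin : ∀ π ∈ stdSimplex ℝ (Fin k), ∀ ρ ∈ stdSimplex ℝ (Fin k), ∀ p ∈ Set.Icc (0:ℝ) 1,
      I (p • π + (1 - p) • ρ) μ = p * I π μ + (1 - p) * I ρ μ)
    (ρ : Fin k → ℝ) (hρ : ρ ∈ stdSimplex ℝ (Fin k))
    (hρmin : ∀ π ∈ stdSimplex ℝ (Fin k), Δ ρ μ ≤ Δ π μ)
    (lam : ℝ) (hlam : 1 < lam)
    (π : Fin k → ℝ) (hπ : π ∈ stdSimplex ℝ (Fin k)) :
    ∃ π' ∈ stdSimplex ℝ (Fin k),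
      Δ π' μ ^ lam / I π' μ ≤ 2 ^ lam * Δ ρ μ ^ (lam - 1) * Δ π μ / I π μ := by
  rcases eq_or_lt_of_le (hInn π hπ) with hI0 | hIpos
  · exact ⟨π, hπ, by rw [← hI0, div_zero, div_zero]⟩
  rcases eq_or_lt_of_le (hΔ01 ρ hρ).1 with hρ0 | hρpos
  · refine ⟨ρ, hρ, ?_⟩
    rw [← hρ0, Real.zero_rpow (by linarith : lam ≠ 0),
      Real.zero_rpow (by intro h; linarith [h] : lam - 1 ≠ 0), zero_div]
    simp
  · have hΔπ : 0 < Δ π μ := lt_of_lt_of_le hρpos (hρmin π hπ)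
    set p := Δ ρ μ / Δ π μ with hp
    have hp0 : 0 < p := div_pos hρpos hΔπ
    have hp1 : p ≤ 1 := (div_le_one hΔπ).2 (hρmin π hπ)
    set π' := p • π + (1 - p) • ρ with hπ'def
    have hmem : π' ∈ stdSimplex ℝ (Fin k) :=
      convex_stdSimplex ℝ (Fin k) hπ hρ hp0.le (by linarith) (by ring)
    refine ⟨π', hmem, ?_⟩
    have hpΔ : p * Δ π μ = Δ ρ μ := div_mul_cancel₀ _ hΔπ.ne'
    have hΔ' : Δ π' μ ≤ 2 * Δ ρ μ := by
      have h := hΔconv π hπ ρ hρ p ⟨hp0.le, hp1⟩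
      nlinarith [(hΔ01 ρ hρ).1]
    have hI' : p * I π μ ≤ I π' μ := by
      rw [hπ'def, hIlin π hπ ρ hρ p ⟨hp0.le, hp1⟩]
      nlinarith [hInn ρ hρ]
    have hΔ'0 : 0 ≤ Δ π' μ := (hΔ01 π' hmem).1
    have key : Δ π' μ ^ lam ≤ (2 * Δ ρ μ) ^ lam :=
      Real.rpow_le_rpow hΔ'0 hΔ' (by linarith)
    have hIp : 0 < p * I π μ := mul_pos hp0 hIpos
    calc Δ π' μ ^ lam / I π' μ ≤ (2 * Δ ρ μ) ^ lam / (p * I π μ) :=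
          div_le_div₀ (by positivity) key hIp hI'
      _ = 2 ^ lam * Δ ρ μ ^ (lam - 1) * Δ π μ / I π μ := by
          rw [Real.mul_rpow (by norm_num) hρpos.le, Real.rpow_sub hρpos, Real.rpow_one, hp]
          field_simp
end

section
/- Let k ≥ 1 and let Δ : [k] × K → [0,∞) be a nonnegative function (instantaneous regret of actions), extended linearly to policies by Δ(π,x) = Σ_a π(a)Δ(a,x). Let μ be a probability distribution with finite support on K and define Δ_*(μ) = min over π ∈ Δ_k of ∫ Δ(π,x) dμ(x). Suppose (π_x)_{x ∈ spt(μ)} is a family of policies and π ∈ Δ_k is a policy with ‖π_x − π‖_∞ ≤ 1/(4k) for all x ∈ spt(μ). Then max over x ∈ spt(μ) of Δ(π_x, x) ≥ Δ_*(μ)/4. -/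
open Finset

theorem stmt_1 {k : ℕ} (hk : 1 ≤ k) {K : Type*} [DecidableEq K]
    (Δ : Fin k → K → ℝ) (hΔ : ∀ a x, 0 ≤ Δ a x)
    (s : Finset K) (w : K → ℝ) (hw0 : ∀ x ∈ s, 0 < w x) (hw1 : ∑ x ∈ s, w x = 1)
    (Δstar : ℝ)
    (hstar : ∀ π' ∈ stdSimplex ℝ (Fin k),
      Δstar ≤ ∑ x ∈ s, w x * ∑ a, π' a * Δ a x)
    (πx : K → (Fin k → ℝ)) (hπx : ∀ x ∈ s, πx x ∈ stdSimplex ℝ (Fin k))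
    (π : Fin k → ℝ) (hπ : π ∈ stdSimplex ℝ (Fin k))
    (hclose : ∀ x ∈ s, ∀ a, |πx x a - π a| ≤ 1 / (4 * k)) :
    ∃ x ∈ s, Δstar / 4 ≤ ∑ a, πx x a * Δ a x := by
  have hkpos : (0:ℝ) < k := by exact_mod_cast hk
  set A : Finset (Fin k) := Finset.univ.filter (fun a => 1/(2*(k:ℝ)) ≤ π a) with hA
  set S : ℝ := ∑ a ∈ A, π a with hS
  -- S ≥ 1/2
  have hπ0 := hπ.1
  have hπ1 := hπ.2
  have hScompl : ∑ a ∈ Aᶜ, π a ≤ 1/2 := by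
    calc ∑ a ∈ Aᶜ, π a ≤ ∑ a ∈ Aᶜ, 1/(2*(k:ℝ)) := by
          refine Finset.sum_le_sum fun a ha => ?_
          have : ¬ (1/(2*(k:ℝ)) ≤ π a) := by
            simpa [hA] using (Finset.mem_compl.mp ha)
          linarith
      _ = (Aᶜ.card : ℝ) * (1/(2*(k:ℝ))) := by rw [Finset.sum_const]; ring
      _ ≤ (k:ℝ) * (1/(2*(k:ℝ))) := by
          have : (Aᶜ.card : ℝ) ≤ (k:ℝ) := by
            exact_mod_cast (Finset.card_le_card (Finset.subset_univ _)).trans_eq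
              (by simp)
          have h2 : 0 ≤ 1/(2*(k:ℝ)) := by positivity
          exact mul_le_mul_of_nonneg_right this h2
      _ = 1/2 := by field_simp
  have hSsplit : S + ∑ a ∈ Aᶜ, π a = 1 := by
    rw [hS, Finset.sum_add_sum_compl]; exact hπ1
  have hShalf : 1/2 ≤ S := by linarith
  have hSpos : 0 < S := by linarith
  -- ρ
  set ρ : Fin k → ℝ := fun a => if a ∈ A then π a / S else 0 with hρ
  have hρmem : ρ ∈ stdSimplex ℝ (Fin k) := by
    constructor
    · intro a
      simp only [hρ]
      split
      · exact div_nonneg (hπ0 a) hSpos.le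
      · exact le_refl 0
    · have h1 : ∑ a, ρ a = ∑ a ∈ A, π a / S := by
        simp only [hρ]
        rw [Finset.sum_ite_mem, Finset.univ_inter]
      rw [h1, ← Finset.sum_div, ← hS, div_self hSpos.ne']
  -- pointwise bound: for x ∈ s, ∑ ρ a Δ a x ≤ 4 ∑ πx x a Δ a x
  have key : ∀ x ∈ s, ∑ a, ρ a * Δ a x ≤ 4 * ∑ a, πx x a * Δ a x := by
    intro x hx
    have h1 : ∑ a, ρ a * Δ a x = (∑ a ∈ A, π a * Δ a x) / S := by
      rw [eq_div_iff hSpos.ne', Finset.sum_mul]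
      rw [← Finset.sum_filter_add_sum_filter_not Finset.univ (· ∈ A)]
      have h2 : ∑ a ∈ Finset.univ.filter (· ∉ A), ρ a * Δ a x * S = 0 := by
        refine Finset.sum_eq_zero fun a ha => ?_
        have := (Finset.mem_filter.mp ha).2
        simp [hρ, this]
      rw [h2, add_zero]
      have hfe : Finset.univ.filter (· ∈ A) = A := by
        ext a; simp [Finset.mem_filter]
      rw [hfe]
      refine Finset.sum_congr rfl fun a ha => ?_
      simp [hρ, ha]
      field_simp
    have hnum0 : 0 ≤ ∑ a ∈ A, π a * Δ a x :=
      Finset.sum_nonneg fun a _ => mul_nonneg (hπ0 a) (hΔ a x)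
    have h3 : (∑ a ∈ A, π a * Δ a x) / S ≤ 2 * ∑ a ∈ A, π a * Δ a x := by
      rw [div_le_iff₀ hSpos]
      nlinarith
    have h4 : ∑ a ∈ A, π a * Δ a x ≤ 2 * ∑ a ∈ A, πx x a * Δ a x := by
      rw [Finset.mul_sum]
      refine Finset.sum_le_sum fun a ha => ?_
      have hge : 1/(2*(k:ℝ)) ≤ π a := by simpa [hA] using ha
      have habs := hclose x hx a
      have hlb : π a - 1/(4*(k:ℝ)) ≤ πx x a := by
        have := abs_le.mp habs
        linarith [this.1]
      have h14 : 1/(4*(k:ℝ)) ≤ π a / 2 := by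
        have he : 1/(4*(k:ℝ)) = (1/(2*(k:ℝ)))/2 := by ring
        rw [he]; linarith
      have : π a / 2 ≤ πx x a := by linarith
      nlinarith [hΔ a x]
    have h5 : ∑ a ∈ A, πx x a * Δ a x ≤ ∑ a, πx x a * Δ a x := by
      refine Finset.sum_le_sum_of_subset_of_nonneg (Finset.subset_univ _) ?_
      intro a _ _
      exact mul_nonneg ((hπx x hx).1 a) (hΔ a x)
    calc ∑ a, ρ a * Δ a x = (∑ a ∈ A, π a * Δ a x) / S := h1
      _ ≤ 2 * ∑ a ∈ A, π a * Δ a x := h3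
      _ ≤ 2 * (2 * ∑ a ∈ A, πx x a * Δ a x) := by linarith
      _ ≤ 4 * ∑ a, πx x a * Δ a x := by linarith
  -- global bound
  have hglob : Δstar ≤ ∑ x ∈ s, w x * (4 * ∑ a, πx x a * Δ a x) := by
    refine (hstar ρ hρmem).trans (Finset.sum_le_sum fun x hx => ?_)
    exact mul_le_mul_of_nonneg_left (key x hx) (hw0 x hx).le
  have hglob2 : Δstar / 4 ≤ ∑ x ∈ s, w x * ∑ a, πx x a * Δ a x := by
    have : ∑ x ∈ s, w x * (4 * ∑ a, πx x a * Δ a x)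
        = 4 * ∑ x ∈ s, w x * ∑ a, πx x a * Δ a x := by
      rw [Finset.mul_sum]; refine Finset.sum_congr rfl fun x _ => by ring
    rw [this] at hglob
    linarith
  -- extract x
  by_contra h
  push_neg at h
  have : ∑ x ∈ s, w x * ∑ a, πx x a * Δ a x < ∑ x ∈ s, w x * (Δstar / 4) := by
    have hne : s.Nonempty := by
      by_contra hne
      rw [Finset.not_nonempty_iff_eq_empty] at hne
      simp [hne] at hw1
    refine Finset.sum_lt_sum_of_nonempty hne fun x hx => ?_
    exact mul_lt_mul_of_pos_left (h x hx) (hw0 x hx)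
  rw [← Finset.sum_mul, hw1, one_mul] at this
  linarith
end

section
/- Let P and Q be probability measures on a filtered space with filtration (F_s)_{s=0}^t, and suppose there is a stopping time τ ≤ t+1 such that KL(P|F_τ, Q|F_τ) ≤ ε. Then for any event A ∈ F_t, Q(A) ≤ P(τ < t) + √(2ε) + P(A), where the middle term comes from Pinsker's inequality applied to the restrictions to F_τ on events {τ < t} and A ∩ {τ ≥ t} which both lie in F_τ. -/
open MeasureTheory
open scoped ENNReal Classical

noncomputable def klDiv {Ω : Type*} {mΩ : MeasurableSpace Ω} (P Q : Measure Ω) : ℝ≥0∞ :=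
  if P ≪ Q ∧ Integrable (fun ω => Real.log (P.rnDeriv Q ω).toReal) P then
    ENNReal.ofReal (∫ ω, Real.log (P.rnDeriv Q ω).toReal ∂P)
  else ⊤

/-!
Both `{τ < t}` and `A ∩ {t ≤ τ}` lie in `F_τ`, hence so does their union `B ⊇ A`, and on `F_τ`
Pinsker's inequality gives `Q B ≤ P B + √(2 ε)`. Pinsker's inequality is proved through the
pointwise bound `3 (x - 1)² ≤ (2x + 4) (x log x - x + 1)` and Cauchy–Schwarz against the weight
`(2x + 4) / 3`, whose integral against a probability density is `2`.
-/

open Set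

namespace Real

lemma le_of_hasDerivAt_of_sub_mul_deriv_nonneg {f f' : ℝ → ℝ} {a b x : ℝ}
    (hf : ∀ y ∈ Ioi a, HasDerivAt f (f' y) y) (hf' : ∀ y ∈ Ioi a, 0 ≤ (y - b) * f' y)
    (hab : a < b) (hx : a < x) : f b ≤ f x := by
  have hcont {D : Set ℝ} (hD : D ⊆ Ioi a) : ContinuousOn f D :=
    fun y hy => (hf y (hD hy)).continuousAt.continuousWithinAt
  have hderiv {D : Set ℝ} (hD : D ⊆ Ioi a) :
      ∀ y ∈ interior D, HasDerivWithinAt f (f' y) (interior D) y :=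
    fun y hy => (hf y (hD (interior_subset hy))).hasDerivWithinAt
  rcases le_or_gt b x with hbx | hxb
  · have hD : Ici b ⊆ Ioi a := Ici_subset_Ioi.2 hab
    refine monotoneOn_of_hasDerivWithinAt_nonneg (convex_Ici b) (hcont hD) (hderiv hD)
      (fun y hy => ?_) self_mem_Ici hbx hbx
    rw [interior_Ici] at hy
    exact (mul_nonneg_iff_of_pos_left (sub_pos.2 hy)).1 (hf' y (hD (mem_Ici.2 hy.le)))
  · have hD : Icc x b ⊆ Ioi a := fun y hy => hx.trans_le hy.1
    refine antitoneOn_of_hasDerivWithinAt_nonpos (convex_Icc x b) (hcont hD) (hderiv hD)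
      (fun y hy => ?_) (left_mem_Icc.2 hxb.le) (right_mem_Icc.2 hxb.le) hxb.le
    rw [interior_Icc] at hy
    exact nonpos_of_mul_nonneg_right (hf' y (hD (Ioo_subset_Icc_self hy))) (sub_neg.2 hy.2)

lemma monotoneOn_add_one_mul_log_sub_two_mul_sub_one :
    MonotoneOn (fun x => (x + 1) * log x - 2 * (x - 1)) (Ioi 0) := by
  have hderiv : ∀ x ∈ Ioi (0 : ℝ),
      HasDerivAt (fun x => (x + 1) * log x - 2 * (x - 1)) (log x + x⁻¹ - 1) x := by
    intro x (hx : 0 < x)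
    refine ((((hasDerivAt_id' x).add_const 1).mul (hasDerivAt_log hx.ne')).sub
      (((hasDerivAt_id' x).sub_const 1).const_mul 2)).congr_deriv ?_
    field_simp
    ring
  refine monotoneOn_of_hasDerivWithinAt_nonneg (convex_Ioi 0)
    (fun x hx => (hderiv x hx).continuousAt.continuousWithinAt)
    (fun x hx => (hderiv x (interior_subset hx)).hasDerivWithinAt) (fun x hx => ?_)
  rw [interior_Ioi] at hx
  linarith [one_sub_inv_le_log_of_pos hx]

end Real

section Pinsker

open Real InformationTheory

variable {α : Type*} {mα : MeasurableSpace α}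

/- The derivative of the difference of the two sides is `4 ((x + 1) log x - 2 (x - 1))`, which has
the sign of `x - 1`. -/
lemma three_mul_sq_sub_one_le_mul_klFun {x : ℝ} (hx : 0 ≤ x) :
    3 * (x - 1) ^ 2 ≤ (2 * x + 4) * klFun x := by
  rcases hx.eq_or_lt with rfl | hx
  · norm_num [klFun_zero]
  set k : ℝ → ℝ := fun x => (x + 1) * log x - 2 * (x - 1)
  have hk : ∀ y ∈ Ioi (0 : ℝ), 0 ≤ (y - 1) * k y := by
    intro y hy
    have hk1 : k 1 = 0 := by simp [k]
    rcases le_total 1 y with h | h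
    · exact mul_nonneg (sub_nonneg.2 h)
        (hk1 ▸ monotoneOn_add_one_mul_log_sub_two_mul_sub_one (mem_Ioi.2 one_pos) hy h)
    · exact mul_nonneg_of_nonpos_of_nonpos (sub_nonpos.2 h)
        (hk1 ▸ monotoneOn_add_one_mul_log_sub_two_mul_sub_one hy (mem_Ioi.2 one_pos) h)
  have hderiv : ∀ y ∈ Ioi (0 : ℝ),
      HasDerivAt (fun y => (2 * y + 4) * klFun y - 3 * (y - 1) ^ 2) (4 * k y) y := by
    intro y hy
    refine (((((hasDerivAt_id' y).const_mul 2).add_const 4).mul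
      (hasDerivAt_klFun (ne_of_gt hy))).sub
      ((((hasDerivAt_id' y).sub_const 1).pow 2).const_mul 3)).congr_deriv ?_
    simp only [k, klFun_apply]
    ring
  have := le_of_hasDerivAt_of_sub_mul_deriv_nonneg hderiv
    (fun y hy => by linarith [hk y hy]) one_pos hx
  norm_num [klFun_one] at this
  linarith

lemma lintegral_abs_sub_one_sq_le_two_mul_lintegral_klFun {ν : Measure α} [IsProbabilityMeasure ν]
    {f : α → ℝ} (hf : Integrable f ν) (hf0 : 0 ≤ᵐ[ν] f) (hf1 : ∫ x, f x ∂ν = 1) :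
    (∫⁻ x, ENNReal.ofReal |f x - 1| ∂ν) ^ 2 ≤ 2 * ∫⁻ x, ENNReal.ofReal (klFun (f x)) ∂ν := by
  set U : α → ℝ≥0∞ := fun x => ENNReal.ofReal ((2 * f x + 4) / 3)
  set V : α → ℝ≥0∞ := fun x => ENNReal.ofReal (klFun (f x))
  have hU_int : Integrable (fun x => (2 * f x + 4) / 3) ν :=
    ((hf.const_mul 2).add (integrable_const 4)).div_const 3
  have hU : ∫⁻ x, U x ∂ν = 2 := by
    rw [← ofReal_integral_eq_lintegral_ofReal hU_int
      (by filter_upwards [hf0] with x hx; simp only [Pi.zero_apply] at hx ⊢; positivity),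
      integral_div, integral_add (hf.const_mul 2) (integrable_const 4), integral_const_mul, hf1]
    norm_num
  have hpt : ∀ᵐ x ∂ν, ENNReal.ofReal |f x - 1| ≤ U x ^ (1 / 2 : ℝ) * V x ^ (1 / 2 : ℝ) := by
    filter_upwards [hf0] with x (hx : 0 ≤ f x)
    rw [← ENNReal.mul_rpow_of_nonneg _ _ (by norm_num), ← ENNReal.ofReal_mul (by positivity),
      ENNReal.ofReal_rpow_of_nonneg (by positivity [klFun_nonneg hx]) (by norm_num),
      ← Real.sqrt_eq_rpow, ← Real.sqrt_sq_eq_abs]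
    gcongr
    linarith [three_mul_sq_sub_one_le_mul_klFun hx]
  have hU_meas : AEMeasurable U ν := ENNReal.measurable_ofReal.comp_aemeasurable hU_int.aemeasurable
  have hV_meas : AEMeasurable V ν :=
    ENNReal.measurable_ofReal.comp_aemeasurable (measurable_klFun.comp_aemeasurable hf.aemeasurable)
  calc (∫⁻ x, ENNReal.ofReal |f x - 1| ∂ν) ^ 2
      ≤ (∫⁻ x, U x ^ (1 / 2 : ℝ) * V x ^ (1 / 2 : ℝ) ∂ν) ^ 2 := by
        gcongr ?_ ^ 2
        exact lintegral_mono_ae hpt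
    _ ≤ ((∫⁻ x, U x ∂ν) ^ (1 / 2 : ℝ) * (∫⁻ x, V x ∂ν) ^ (1 / 2 : ℝ)) ^ 2 := by
        gcongr
        exact ENNReal.lintegral_mul_norm_pow_le hU_meas hV_meas (by norm_num) (by norm_num)
          (add_halves 1)
    _ = 2 * ∫⁻ x, V x ∂ν := by
        rw [hU, ← ENNReal.mul_rpow_of_nonneg _ _ (by norm_num), ← ENNReal.rpow_natCast,
          ← ENNReal.rpow_mul]
        norm_num

lemma measure_le_add_lintegral_abs_toReal_rnDeriv_sub_one (μ ν : Measure α) [SigmaFinite μ]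
    (s : Set α) : ν s ≤ μ s + ∫⁻ x, ENNReal.ofReal |(μ.rnDeriv ν x).toReal - 1| ∂ν := by
  have hpt : ∀ᵐ x ∂ν, 1 ≤ μ.rnDeriv ν x + ENNReal.ofReal |(μ.rnDeriv ν x).toReal - 1| := by
    filter_upwards [Measure.rnDeriv_lt_top μ ν] with x hx
    rw [← ENNReal.ofReal_toReal hx.ne, ← ENNReal.ofReal_add ENNReal.toReal_nonneg (abs_nonneg _),
      ENNReal.toReal_ofReal ENNReal.toReal_nonneg, ← ENNReal.ofReal_one]
    exact ENNReal.ofReal_le_ofReal (by linarith [neg_abs_le ((μ.rnDeriv ν x).toReal - 1)])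
  calc ν s = ∫⁻ _ in s, 1 ∂ν := (setLIntegral_one s).symm
    _ ≤ ∫⁻ x in s, (μ.rnDeriv ν x + ENNReal.ofReal |(μ.rnDeriv ν x).toReal - 1|) ∂ν :=
        lintegral_mono_ae (ae_restrict_of_ae hpt)
    _ = (∫⁻ x in s, μ.rnDeriv ν x ∂ν) + ∫⁻ x in s, ENNReal.ofReal |(μ.rnDeriv ν x).toReal - 1| ∂ν :=
        lintegral_add_left (Measure.measurable_rnDeriv μ ν) _
    _ ≤ μ s + ∫⁻ x, ENNReal.ofReal |(μ.rnDeriv ν x).toReal - 1| ∂ν :=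
        add_le_add (Measure.setLIntegral_rnDeriv_le s) (setLIntegral_le_lintegral _ _)

theorem measure_le_add_sqrt_two_mul_of_klDiv_le {μ ν : Measure α} [IsProbabilityMeasure μ]
    [IsProbabilityMeasure ν] {ε : ℝ} (h : InformationTheory.klDiv μ ν ≤ ENNReal.ofReal ε)
    (s : Set α) : ν s ≤ μ s + ENNReal.ofReal √(2 * ε) := by
  have hμν : μ ≪ ν := (klDiv_ne_top_iff.1 (ne_top_of_le_ne_top ENNReal.ofReal_ne_top h)).1
  have hL1 : ∫⁻ x, ENNReal.ofReal |(μ.rnDeriv ν x).toReal - 1| ∂ν ≤ ENNReal.ofReal √(2 * ε) := by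
    rw [← ENNReal.pow_le_pow_left_iff two_ne_zero]
    calc (∫⁻ x, ENNReal.ofReal |(μ.rnDeriv ν x).toReal - 1| ∂ν) ^ 2
        ≤ 2 * InformationTheory.klDiv μ ν := by
          rw [klDiv_eq_lintegral_klFun_of_ac hμν]
          refine lintegral_abs_sub_one_sq_le_two_mul_lintegral_klFun
            Measure.integrable_toReal_rnDeriv (ae_of_all _ fun _ => ENNReal.toReal_nonneg) ?_
          simp [Measure.integral_toReal_rnDeriv hμν]
      _ ≤ 2 * ENNReal.ofReal ε := by gcongr
      _ = ENNReal.ofReal √(2 * ε) ^ 2 := by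
          rw [← ENNReal.ofReal_pow (Real.sqrt_nonneg _), Real.sq_sqrt', ENNReal.ofReal_max,
            ENNReal.ofReal_zero, max_eq_left zero_le, ENNReal.ofReal_mul zero_le_two,
            ENNReal.ofReal_ofNat]
  exact (measure_le_add_lintegral_abs_toReal_rnDeriv_sub_one μ ν s).trans (by gcongr)

end Pinsker

lemma klDiv_eq_informationTheory_klDiv {α : Type*} {mα : MeasurableSpace α} (μ ν : Measure α)
    [IsProbabilityMeasure μ] [IsProbabilityMeasure ν] :
    klDiv μ ν = InformationTheory.klDiv μ ν := by
  simp only [klDiv, InformationTheory.klDiv_def, probReal_univ, add_sub_cancel_right]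
  rfl

instance MeasureTheory.isProbabilityMeasure_trim {α : Type*} {m m0 : MeasurableSpace α}
    (hm : m ≤ m0) (μ : Measure α) [IsProbabilityMeasure μ] : IsProbabilityMeasure (μ.trim hm) :=
  ⟨by rw [trim_measurableSet_eq hm MeasurableSet.univ, measure_univ]⟩

lemma MeasureTheory.IsStoppingTime.measurableSet_inter_const_le {Ω ι : Type*}
    {m : MeasurableSpace Ω} [LinearOrder ι] [TopologicalSpace ι] [SecondCountableTopology ι]
    [OrderTopology ι] {f : Filtration ι m} {τ : Ω → WithTop ι} (hτ : IsStoppingTime f τ) {i : ι}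
    {s : Set Ω} (hs : MeasurableSet[f i] s) :
    MeasurableSet[hτ.measurableSpace] (s ∩ {ω | (i : WithTop ι) ≤ τ ω}) :=
  measurableSpace_mono _ hτ (fun _ => min_le_right _ _) _
    (measurableSet_inter_le (isStoppingTime_const f i) hτ s (by rwa [measurableSpace_const]))

theorem stmt_13_general {Ω : Type*} {m0 : MeasurableSpace Ω}
    (F : MeasureTheory.Filtration ℕ m0)
    (P Q : Measure Ω) [IsProbabilityMeasure P] [IsProbabilityMeasure Q]
    (t : ℕ) (τ : Ω → ℕ) (hτ : MeasureTheory.IsStoppingTime F (fun ω => (τ ω : WithTop ℕ)))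
    (ε : ℝ)
    (hKL : @klDiv Ω hτ.measurableSpace (P.trim hτ.measurableSpace_le)
        (Q.trim hτ.measurableSpace_le) ≤ ENNReal.ofReal ε) :
    ∀ A : Set Ω, MeasurableSet[F t] A →
      Q A ≤ P {ω | τ ω < t} + ENNReal.ofReal (Real.sqrt (2 * ε)) + P A := by
  intro A hA
  set B := {ω | τ ω < t} ∪ A ∩ {ω | t ≤ τ ω}
  have hB : MeasurableSet[hτ.measurableSpace] B := by
    refine MeasurableSet.union ?_ ?_
    · simpa using hτ.measurableSet_lt_of_countable' t
    · simpa using hτ.measurableSet_inter_const_le hA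
  have hAB : A ⊆ B := fun ω hω => (lt_or_ge (τ ω) t).imp id (fun h => ⟨hω, h⟩)
  rw [klDiv_eq_informationTheory_klDiv] at hKL
  calc Q A ≤ Q B := measure_mono hAB
    _ = Q.trim hτ.measurableSpace_le B := (trim_measurableSet_eq _ hB).symm
    _ ≤ P.trim hτ.measurableSpace_le B + ENNReal.ofReal √(2 * ε) :=
        measure_le_add_sqrt_two_mul_of_klDiv_le hKL B
    _ = P B + ENNReal.ofReal √(2 * ε) := by rw [trim_measurableSet_eq _ hB]
    _ ≤ P {ω | τ ω < t} + P A + ENNReal.ofReal √(2 * ε) := by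
        gcongr
        exact (measure_union_le _ _).trans (by gcongr; exact inter_subset_left)
    _ = P {ω | τ ω < t} + ENNReal.ofReal √(2 * ε) + P A := add_right_comm _ _ _

theorem stmt_13 {Ω : Type*} {m0 : MeasurableSpace Ω}
    (F : MeasureTheory.Filtration ℕ m0)
    (P Q : Measure Ω) [IsProbabilityMeasure P] [IsProbabilityMeasure Q]
    (t : ℕ) (τ : Ω → ℕ) (hτ : MeasureTheory.IsStoppingTime F (fun ω => (τ ω : WithTop ℕ)))
    (hτle : ∀ ω, τ ω ≤ t + 1)
    (ε : ℝ) (hε : 0 ≤ ε)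
    (hKL : @klDiv Ω hτ.measurableSpace (P.trim hτ.measurableSpace_le)
        (Q.trim hτ.measurableSpace_le) ≤ ENNReal.ofReal ε) :
    ∀ A : Set Ω, MeasurableSet[F t] A →
      Q A ≤ P {ω | τ ω < t} + ENNReal.ofReal (Real.sqrt (2 * ε)) + P A :=
  stmt_13_general F P Q t τ hτ ε hKL
end
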